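/- For any commutative ring R and any element s ∈ R, the flat R-module R[s⁻¹] has projective dimension at most 1. -/

import Mathlib

open CategoryTheory

open Polynomial in
private lemma aux_mul_injective (R : Type) [CommRing R] (s : R) :
    Function.Injective (LinearMap.mulLeft R (C s * X - 1) :
      Polynomial R →ₗ[R] Polynomial R) := by
  rw [injective_iff_map_eq_zero]
  intro p h
  simp only [LinearMap.mulLeft_apply] at h
  have hp : p = C s * (X * p) := by ring_nf; linear_combination -h
  have hc : ∀ n, p.coeff n = 0 := by
    intro n
    induction n with
    | zero =>
      conv_lhs => rw [hp]
      simp [Polynomial.mul_coeff_zero]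
    | succ n ih =>
      conv_lhs => rw [hp]
      simp [Polynomial.coeff_C_mul, Polynomial.coeff_X_mul, ih]
  exact Polynomial.ext hc

set_option maxHeartbeats 1000000 in
open Polynomial in
theorem localization_away_flat_and_projdim_le_one (R : Type) [CommRing R] (s : R) :
    Module.Flat R (Localization.Away s) ∧
      ∃ (P₀ P₁ : ModuleCat R), Projective P₀ ∧ Projective P₁ ∧
        ∃ (f : P₁ ⟶ P₀) (g : P₀ ⟶ ModuleCat.of R (Localization.Away s)),
          Function.Injective f ∧ Function.Surjective g ∧ Function.Exact f g := by
  refine ⟨inferInstance, ?_⟩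
  refine ⟨ModuleCat.of R (Polynomial R), ModuleCat.of R (Polynomial R),
    ModuleCat.projective_of_free (Polynomial.basisMonomials R),
    ModuleCat.projective_of_free (Polynomial.basisMonomials R), ?_⟩
  set a : Polynomial R := C s * X - 1 with ha
  set I : Ideal (Polynomial R) := Ideal.span {a} with hI
  let e : AdjoinRoot a ≃ₐ[R] Localization.Away s := (Localization.awayEquivAdjoin s).symm
  let fl : Polynomial R →ₗ[R] Polynomial R := LinearMap.mulLeft R a
  let ml : Polynomial R →ₗ[R] AdjoinRoot a := (Ideal.Quotient.mkₐ R I).toLinearMap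
  let gl : Polynomial R →ₗ[R] Localization.Away s := e.toLinearMap.comp ml
  refine ⟨ModuleCat.ofHom fl, ModuleCat.ofHom gl, aux_mul_injective R s, ?_, ?_⟩
  · show Function.Surjective gl
    exact e.surjective.comp (Ideal.Quotient.mk_surjective)
  · show Function.Exact fl gl
    intro p
    constructor
    · intro hgp
      have hgp' : e (ml p) = 0 := hgp
      have hm : ml p = 0 := e.injective (by rw [map_zero]; exact hgp')
      have hmem : p ∈ I := by
        exact Ideal.Quotient.eq_zero_iff_mem.mp (show (Ideal.Quotient.mk I p : Polynomial R ⧸ I) = 0 from hm)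
      rw [hI, Ideal.mem_span_singleton] at hmem
      obtain ⟨c, hc⟩ := hmem
      exact ⟨c, by simp [fl, LinearMap.mulLeft_apply, hc.symm]⟩
    · rintro ⟨c, rfl⟩
      have : ml (fl c) = 0 := by
        show (Ideal.Quotient.mk I (a * c) : Polynomial R ⧸ I) = 0
        rw [Ideal.Quotient.eq_zero_iff_mem]
        exact Ideal.mul_mem_right c _ (Ideal.subset_span rfl)
      show e (ml (fl c)) = 0
      rw [this, map_zero]
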